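/- Let Φ be a linear flow on ℝ^d, let M ⊂ S^{d-1} be a compact chain transitive set for the induced spherical flow, and let V⁺ = {α v : α > 0, v ∈ M} be the generated cone. If V⁺ contains a half-line l = {α v₀ : α > 0}, v₀ ∈ M, such that π_P(l) is chain transitive for the induced flow on the open upper hemisphere of the Poincaré sphere S^d, then the closure of π_P(V⁺) is chain transitive for the induced flow on the closed upper hemisphere of S^d. -/

import Mathlib

/-!
Every point of the closure of `π_P(V⁺)` is chain equivalent to `π_P(v₀)` in the closed
hemisphere, so any two of them are joined by concatenated chains. The closure consists of
`π_P(V⁺)`, the pole `π_P(0)` and the equator copy of `M`. By linearity, a spherical chain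
`u₀, …, uₙ` with times `tᵢ` lifts to the chain `π_P(ρᵢ uᵢ)`, `ρᵢ₊₁ = ρᵢ ‖Φ(tᵢ, uᵢ)‖`, with
jumps at most doubled; choosing `ρ₀` makes the lift start or end at any prescribed point of the
half-line through the endpoint, where the chain transitivity of `π_P(l)` takes over. For large
`ρ` the point `π_P(ρ u)` is `2/ρ`-close to the equator point of `u`, and the pole is fixed and
close to `π_P(α v₀)` for small `α`.
-/

open Metric Finset

noncomputable section

abbrev Vec (d : ℕ) := EuclideanSpace ℝ (Fin d)

def ChainIn {X : Type*} [MetricSpace X] (Φ : ℝ → X → X) (S : Set X)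
    (ε T : ℝ) (x y : X) : Prop :=
  ∃ (n : ℕ) (u : ℕ → X) (t : ℕ → ℝ), 1 ≤ n ∧ u 0 = x ∧ u n = y ∧
    (∀ i ≤ n, u i ∈ S) ∧ (∀ i < n, T ≤ t i) ∧
    ∀ i < n, dist (Φ (t i) (u i)) (u (i + 1)) < ε

def OmegaIn {X : Type*} [MetricSpace X] (Φ : ℝ → X → X) (S : Set X) (x : X) : Set X :=
  {y | ∀ ε T : ℝ, 0 < ε → 0 < T → ChainIn Φ S ε T x y}

def ChainTransOn {X : Type*} [MetricSpace X] (Φ : ℝ → X → X) (S A : Set X) : Prop :=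
  ∀ x ∈ A, ∀ y ∈ A, y ∈ OmegaIn Φ S x

structure IsFlow {X : Type*} [MetricSpace X] (Φ : ℝ → X → X) : Prop where
  cont : Continuous fun q : ℝ × X => Φ q.1 q.2
  init : ∀ x, Φ 0 x = x
  comp : ∀ s t x, Φ (s + t) x = Φ s (Φ t x)

def sphere1 (d : ℕ) : Set (Vec d) := {v | ‖v‖ = 1}

structure IsLinearFlow (d : ℕ) (Φ : ℝ → Vec d → Vec d) : Prop where
  cont : Continuous fun q : ℝ × Vec d => Φ q.1 q.2
  lin : ∀ t, IsLinearMap ℝ (Φ t)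
  init : ∀ x, Φ 0 x = x
  comp : ∀ s t x, Φ (s + t) x = Φ s (Φ t x)

def sphFlow {d : ℕ} (Φ : ℝ → Vec d → Vec d) : ℝ → Vec d → Vec d :=
  fun t v => ‖Φ t v‖⁻¹ • Φ t v

abbrev PVec (d : ℕ) := WithLp 2 (Vec d × ℝ)

def emb {d : ℕ} (v : Vec d) (r : ℝ) : PVec d := (WithLp.equiv 2 (Vec d × ℝ)).symm (v, r)

def piP {d : ℕ} (v : Vec d) : PVec d := ‖emb v 1‖⁻¹ • emb v 1

def extFlow {d : ℕ} (Φ : ℝ → Vec d → Vec d) : ℝ → PVec d → PVec d :=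
  fun t p => emb (Φ t ((WithLp.equiv 2 (Vec d × ℝ)) p).1) ((WithLp.equiv 2 (Vec d × ℝ)) p).2

def poinFlow {d : ℕ} (Φ : ℝ → Vec d → Vec d) : ℝ → PVec d → PVec d :=
  fun t p => ‖extFlow Φ t p‖⁻¹ • extFlow Φ t p

def openHemi (d : ℕ) : Set (PVec d) :=
  {p | ‖p‖ = 1 ∧ 0 < ((WithLp.equiv 2 (Vec d × ℝ)) p).2}

def closedHemi (d : ℕ) : Set (PVec d) :=
  {p | ‖p‖ = 1 ∧ 0 ≤ ((WithLp.equiv 2 (Vec d × ℝ)) p).2}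

def matFlow (d : ℕ) (A : Matrix (Fin d) (Fin d) ℝ) : ℝ → Vec d → Vec d :=
  fun t x => (EuclideanSpace.equiv (Fin d) ℝ).symm
    ((NormedSpace.exp (t • A)).mulVec (EuclideanSpace.equiv (Fin d) ℝ x))

namespace ChainIn

variable {X : Type*} [MetricSpace X] {Φ : ℝ → X → X} {S S' : Set X} {ε ε' T : ℝ} {x y z : X}

theorem mono_set (h : ChainIn Φ S ε T x y) (hS : S ⊆ S') : ChainIn Φ S' ε T x y := by
  obtain ⟨n, u, t, hn, h0, hn', hu, ht, hj⟩ := h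
  exact ⟨n, u, t, hn, h0, hn', fun i hi => hS (hu i hi), ht, hj⟩

theorem mono_eps (h : ChainIn Φ S ε T x y) (hε : ε ≤ ε') : ChainIn Φ S ε' T x y := by
  obtain ⟨n, u, t, hn, h0, hn', hu, ht, hj⟩ := h
  exact ⟨n, u, t, hn, h0, hn', hu, ht, fun i hi => (hj i hi).trans_le hε⟩

theorem single {τ : ℝ} (hx : x ∈ S) (hy : y ∈ S) (hτ : T ≤ τ) (hd : dist (Φ τ x) y < ε) :
    ChainIn Φ S ε T x y := by
  refine ⟨1, fun i => if i = 0 then x else y, fun _ => τ, le_rfl, rfl, rfl, ?_,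
    fun _ _ => hτ, ?_⟩
  · intro i _
    dsimp only
    split_ifs <;> assumption
  · intro i hi
    obtain rfl : i = 0 := by omega
    simpa using hd

theorem trans (h₁ : ChainIn Φ S ε T x y) (h₂ : ChainIn Φ S ε T y z) : ChainIn Φ S ε T x z := by
  obtain ⟨n₁, u₁, t₁, hn₁, h0₁, hN₁, hu₁, ht₁, hj₁⟩ := h₁
  obtain ⟨n₂, u₂, t₂, hn₂, h0₂, hN₂, hu₂, ht₂, hj₂⟩ := h₂
  set u : ℕ → X := fun i => if i < n₁ then u₁ i else u₂ (i - n₁)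
  have hu_left : ∀ i ≤ n₁, u i = u₁ i := by
    intro i hi
    rcases hi.lt_or_eq with hi | rfl
    · simp [u, hi]
    · simp [u, h0₂, hN₁]
  have hu_right : ∀ i, u (n₁ + i) = u₂ i := fun i => by simp [u]
  refine ⟨n₁ + n₂, u, fun i => if i < n₁ then t₁ i else t₂ (i - n₁), by omega,
    (hu_left 0 (Nat.zero_le _)).trans h0₁, (hu_right n₂).trans hN₂, ?_, ?_, ?_⟩
  · intro i hi
    by_cases h : i ≤ n₁
    · rw [hu_left i h]; exact hu₁ i h
    · obtain ⟨k, rfl⟩ := Nat.exists_eq_add_of_le (le_of_not_ge h)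
      rw [hu_right]; exact hu₂ k (by omega)
  · intro i hi
    by_cases h : i < n₁
    · simpa [h] using ht₁ i h
    · simpa [h] using ht₂ (i - n₁) (by omega)
  · intro i hi
    by_cases h : i < n₁
    · simpa [h, hu_left i h.le, hu_left (i + 1) h] using hj₁ i h
    · obtain ⟨k, rfl⟩ := Nat.exists_eq_add_of_le (le_of_not_gt h)
      simpa [add_assoc, hu_right] using hj₂ k (by omega)

theorem retarget (h : ChainIn Φ S ε T x y) (hz : z ∈ S) : ChainIn Φ S (ε + dist y z) T x z := by
  obtain ⟨n, u, t, hn, h0, hN, hu, ht, hj⟩ := h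
  refine ⟨n, Function.update u n z, t, hn, by simp [Function.update_of_ne (by omega : 0 ≠ n), h0],
    by simp, ?_, ht, ?_⟩
  · intro i hi
    rcases eq_or_ne i n with rfl | hne
    · simpa using hz
    · simpa [Function.update_of_ne hne] using hu i hi
  · intro i hi
    rw [Function.update_of_ne hi.ne]
    rcases eq_or_ne (i + 1) n with hlast | hne
    · rw [hlast, Function.update_self]
      calc dist (Φ (t i) (u i)) z ≤ dist (Φ (t i) (u i)) y + dist y z := dist_triangle _ _ _
        _ < ε + dist y z := by rw [← hN, ← hlast]; gcongr; exact hj i hi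
    · rw [Function.update_of_ne hne]
      exact (hj i hi).trans_le (le_add_of_nonneg_right dist_nonneg)

end ChainIn

section OmegaIn

variable {X : Type*} [MetricSpace X] {Φ : ℝ → X → X} {S S' A : Set X} {x y z : X}

theorem omegaIn_mono (hS : S ⊆ S') : OmegaIn Φ S x ⊆ OmegaIn Φ S' x :=
  fun _ hy ε T hε hT => (hy ε T hε hT).mono_set hS

theorem mem_omegaIn_trans (hy : y ∈ OmegaIn Φ S x) (hz : z ∈ OmegaIn Φ S y) :
    z ∈ OmegaIn Φ S x :=
  fun ε T hε hT => (hy ε T hε hT).trans (hz ε T hε hT)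

def ChainEquiv (Φ : ℝ → X → X) (S : Set X) (x y : X) : Prop :=
  y ∈ OmegaIn Φ S x ∧ x ∈ OmegaIn Φ S y

theorem chainTransOn_of_chainEquiv (c : X) (h : ∀ x ∈ A, ChainEquiv Φ S c x) :
    ChainTransOn Φ S A :=
  fun x hx y hy => mem_omegaIn_trans (h x hx).2 (h y hy).1

end OmegaIn

section PoincareSphere

variable {d : ℕ}

theorem emb_sub (v w : Vec d) (r s : ℝ) : emb v r - emb w s = emb (v - w) (r - s) := rfl

theorem emb_smul (c : ℝ) (v : Vec d) (r : ℝ) : c • emb v r = emb (c • v) (c * r) := rfl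

theorem norm_emb_sq (v : Vec d) (r : ℝ) : ‖emb v r‖ ^ 2 = ‖v‖ ^ 2 + r ^ 2 := by
  rw [WithLp.prod_norm_sq_eq_of_L2]
  simp [emb, Real.norm_eq_abs, sq_abs]

theorem norm_emb_zero (v : Vec d) : ‖emb v 0‖ = ‖v‖ := by
  have := norm_emb_sq v 0
  nlinarith [norm_nonneg (emb v 0), norm_nonneg v]

theorem norm_le_norm_emb_one (v : Vec d) : ‖v‖ ≤ ‖emb v 1‖ := by
  have := norm_emb_sq v 1
  nlinarith [norm_nonneg (emb v 1), norm_nonneg v]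

theorem one_le_norm_emb_one (v : Vec d) : 1 ≤ ‖emb v 1‖ := by
  have := norm_emb_sq v 1
  nlinarith [norm_nonneg (emb v 1), norm_nonneg v]

theorem norm_emb_one_pos (v : Vec d) : 0 < ‖emb v 1‖ := one_pos.trans_le (one_le_norm_emb_one v)

theorem norm_emb_zero_one : ‖emb (0 : Vec d) 1‖ = 1 := by
  have := norm_emb_sq (0 : Vec d) 1
  nlinarith [norm_nonneg (emb (0 : Vec d) 1), norm_zero (E := Vec d)]

theorem piP_zero : piP (0 : Vec d) = emb 0 1 := by
  rw [piP, norm_emb_zero_one, inv_one, one_smul]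

theorem piP_mem_openHemi (v : Vec d) : piP v ∈ openHemi d := by
  refine ⟨?_, ?_⟩
  · rw [piP, norm_smul, norm_inv, norm_norm, inv_mul_cancel₀ (norm_emb_one_pos v).ne']
  · change 0 < ‖emb v 1‖⁻¹ * 1
    exact mul_pos (inv_pos.2 (norm_emb_one_pos v)) one_pos

theorem openHemi_subset_closedHemi : openHemi d ⊆ closedHemi d := fun _ hp => ⟨hp.1, hp.2.le⟩

theorem emb_zero_mem_closedHemi {v : Vec d} (hv : ‖v‖ = 1) : emb v 0 ∈ closedHemi d :=
  ⟨by rw [norm_emb_zero, hv], le_rfl⟩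

theorem norm_inv_smul_sub_inv_smul_le {E : Type*} [NormedAddCommGroup E] [NormedSpace ℝ E]
    {x y : E} (hx : x ≠ 0) (hy : y ≠ 0) :
    ‖‖x‖⁻¹ • x - ‖y‖⁻¹ • y‖ ≤ 2 * ‖x - y‖ / ‖x‖ := by
  have hx' : 0 < ‖x‖ := norm_pos_iff.2 hx
  have hy' : 0 < ‖y‖ := norm_pos_iff.2 hy
  have hsplit : ‖x‖⁻¹ • x - ‖y‖⁻¹ • y = ‖x‖⁻¹ • (x - y) + (‖x‖⁻¹ - ‖y‖⁻¹) • y := by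
    rw [smul_sub, sub_smul]; abel
  have hscale : ‖(‖x‖⁻¹ - ‖y‖⁻¹) • y‖ = |‖y‖ - ‖x‖| / ‖x‖ := by
    rw [norm_smul, Real.norm_eq_abs, inv_sub_inv hx'.ne' hy'.ne', abs_div,
      abs_of_pos (mul_pos hx' hy')]
    field_simp
  calc ‖‖x‖⁻¹ • x - ‖y‖⁻¹ • y‖
      ≤ ‖‖x‖⁻¹ • (x - y)‖ + ‖(‖x‖⁻¹ - ‖y‖⁻¹) • y‖ := hsplit ▸ norm_add_le _ _
    _ ≤ ‖x - y‖ / ‖x‖ + ‖x - y‖ / ‖x‖ := by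
        rw [hscale, norm_smul, norm_inv, norm_norm, inv_mul_eq_div]
        gcongr
        rw [abs_sub_comm]
        exact abs_norm_sub_norm_le x y
    _ = 2 * ‖x - y‖ / ‖x‖ := by ring

theorem dist_piP_le (a b : Vec d) : dist (piP a) (piP b) ≤ 2 * dist a b / ‖emb a 1‖ := by
  have hne : ∀ v : Vec d, emb v 1 ≠ 0 := fun v => norm_pos_iff.1 (norm_emb_one_pos v)
  rw [dist_eq_norm, dist_eq_norm, piP, piP]
  convert norm_inv_smul_sub_inv_smul_le (hne a) (hne b) using 3
  rw [emb_sub, sub_self, norm_emb_zero]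

theorem dist_piP_le_two_mul (a b : Vec d) : dist (piP a) (piP b) ≤ 2 * dist a b :=
  (dist_piP_le a b).trans (div_le_self (by positivity) (one_le_norm_emb_one a))

theorem dist_piP_smul_le {s : Vec d} (hs : ‖s‖ = 1) (ρ : ℝ) (w : Vec d) :
    dist (piP (ρ • s)) (piP (ρ • w)) ≤ 2 * dist s w := by
  have hρ : ‖ρ‖ ≤ ‖emb (ρ • s) 1‖ := by
    simpa [norm_smul, hs] using norm_le_norm_emb_one (ρ • s)
  refine (dist_piP_le _ _).trans ?_
  rw [div_le_iff₀ (norm_emb_one_pos _), dist_smul₀]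
  calc 2 * (‖ρ‖ * dist s w) = 2 * dist s w * ‖ρ‖ := by ring
    _ ≤ 2 * dist s w * ‖emb (ρ • s) 1‖ := by gcongr

theorem dist_piP_smul_emb_zero_le {s : Vec d} (hs : ‖s‖ = 1) {ρ : ℝ} (hρ : 0 < ρ) :
    dist (piP (ρ • s)) (emb s 0) ≤ 2 / ρ := by
  have hρs : ‖emb (ρ • s) 0‖ = ρ := by
    rw [norm_emb_zero, norm_smul, hs, Real.norm_eq_abs, abs_of_pos hρ, mul_one]
  have hequator : ‖emb (ρ • s) 0‖⁻¹ • emb (ρ • s) 0 = emb s 0 := by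
    rw [hρs, emb_smul, smul_smul, inv_mul_cancel₀ hρ.ne', one_smul, mul_zero]
  have hlower : ρ ≤ ‖emb (ρ • s) 1‖ := by
    simpa [norm_smul, hs, abs_of_pos hρ] using norm_le_norm_emb_one (ρ • s)
  have h := norm_inv_smul_sub_inv_smul_le (norm_pos_iff.1 (norm_emb_one_pos (ρ • s)))
    (norm_pos_iff.1 (hρs.symm ▸ hρ))
  rw [hequator, emb_sub, sub_self, sub_zero, norm_emb_zero_one] at h
  calc dist (piP (ρ • s)) (emb s 0) ≤ 2 * 1 / ‖emb (ρ • s) 1‖ := by rwa [dist_eq_norm, piP]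
    _ ≤ 2 / ρ := by rw [mul_one]; gcongr

end PoincareSphere

namespace IsLinearFlow

variable {d : ℕ} {Φ : ℝ → Vec d → Vec d}

theorem map_smul (hΦ : IsLinearFlow d Φ) (t c : ℝ) (v : Vec d) : Φ t (c • v) = c • Φ t v :=
  (hΦ.lin t).map_smul c v

theorem map_zero (hΦ : IsLinearFlow d Φ) (t : ℝ) : Φ t 0 = 0 := (hΦ.lin t).map_zero

theorem apply_ne_zero (hΦ : IsLinearFlow d Φ) (t : ℝ) {v : Vec d} (hv : v ≠ 0) : Φ t v ≠ 0 := by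
  intro h
  have := hΦ.comp (-t) t v
  rw [neg_add_cancel, hΦ.init, h, hΦ.map_zero] at this
  exact hv this

theorem norm_apply_pos (hΦ : IsLinearFlow d Φ) (t : ℝ) {v : Vec d} (hv : ‖v‖ = 1) :
    0 < ‖Φ t v‖ :=
  norm_pos_iff.2 (hΦ.apply_ne_zero t (norm_ne_zero_iff.1 (hv ▸ one_ne_zero)))

theorem norm_sphFlow (hΦ : IsLinearFlow d Φ) (t : ℝ) {v : Vec d} (hv : ‖v‖ = 1) :
    ‖sphFlow Φ t v‖ = 1 := by
  rw [sphFlow, norm_smul, norm_inv, norm_norm, inv_mul_cancel₀ (hΦ.norm_apply_pos t hv).ne']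

theorem poinFlow_piP (hΦ : IsLinearFlow d Φ) (t : ℝ) (v : Vec d) :
    poinFlow Φ t (piP v) = piP (Φ t v) := by
  have hc : 0 < ‖emb v 1‖⁻¹ := inv_pos.2 (norm_emb_one_pos v)
  have hflow : extFlow Φ t (piP v) = ‖emb v 1‖⁻¹ • emb (Φ t v) 1 := by
    rw [piP, emb_smul, emb_smul, ← hΦ.map_smul]
    rfl
  rw [poinFlow, hflow, norm_smul, Real.norm_eq_abs, abs_of_pos hc, smul_smul, piP]
  congr 1
  field_simp [(norm_emb_one_pos v).ne']

theorem poinFlow_piP_smul (hΦ : IsLinearFlow d Φ) (t ρ : ℝ) {v : Vec d} (hv : ‖v‖ = 1) :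
    poinFlow Φ t (piP (ρ • v)) = piP ((ρ * ‖Φ t v‖) • sphFlow Φ t v) := by
  rw [hΦ.poinFlow_piP, hΦ.map_smul, sphFlow, smul_smul, mul_assoc,
    mul_inv_cancel₀ (hΦ.norm_apply_pos t hv).ne', mul_one]

theorem poinFlow_emb_zero (t : ℝ) (v : Vec d) :
    poinFlow Φ t (emb v 0) = emb (sphFlow Φ t v) 0 := by
  rw [poinFlow, show extFlow Φ t (emb v 0) = emb (Φ t v) 0 from rfl, norm_emb_zero, emb_smul,
    mul_zero, sphFlow]

end IsLinearFlow

section Lift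

variable {d : ℕ} {Φ : ℝ → Vec d → Vec d}

def chainGrowth (Φ : ℝ → Vec d → Vec d) (u : ℕ → Vec d) (t : ℕ → ℝ) (i : ℕ) : ℝ :=
  ∏ j ∈ range i, ‖Φ (t j) (u j)‖

theorem chainGrowth_succ (u : ℕ → Vec d) (t : ℕ → ℝ) (i : ℕ) :
    chainGrowth Φ u t (i + 1) = chainGrowth Φ u t i * ‖Φ (t i) (u i)‖ :=
  prod_range_succ _ _

theorem chainGrowth_one (u : ℕ → Vec d) (t : ℕ → ℝ) :
    chainGrowth Φ u t 1 = ‖Φ (t 0) (u 0)‖ :=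
  prod_range_one _

theorem IsLinearFlow.chainGrowth_pos (hΦ : IsLinearFlow d Φ) {u : ℕ → Vec d} (t : ℕ → ℝ)
    {i : ℕ} (hu : ∀ j < i, u j ∈ sphere1 d) : 0 < chainGrowth Φ u t i :=
  prod_pos fun j hj => hΦ.norm_apply_pos _ (hu j (mem_range.1 hj))

/-- Only the first jump depends on the starting point, so `x` may be the lift `piP (ρ • u 0)`
as well as the equator point `emb (u 0) 0`. -/
theorem IsLinearFlow.chainIn_lift (hΦ : IsLinearFlow d Φ) {n : ℕ} {u : ℕ → Vec d}
    {t : ℕ → ℝ} {δ ε T ρ : ℝ} {x : PVec d} (hn : 1 ≤ n) (hu : ∀ i ≤ n, u i ∈ sphere1 d)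
    (ht : ∀ i < n, T ≤ t i) (hjump : ∀ i < n, dist (sphFlow Φ (t i) (u i)) (u (i + 1)) < δ)
    (hx : x ∈ closedHemi d)
    (hstart : dist (poinFlow Φ (t 0) x)
      (piP ((ρ * ‖Φ (t 0) (u 0)‖) • sphFlow Φ (t 0) (u 0))) + 2 * δ ≤ ε) :
    ChainIn (poinFlow Φ) (closedHemi d) ε T x (piP ((ρ * chainGrowth Φ u t n) • u n)) := by
  set p : ℕ → PVec d := fun i => piP ((ρ * chainGrowth Φ u t i) • u i)
  have hflow : ∀ i < n, poinFlow Φ (t i) (p i) =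
      piP ((ρ * chainGrowth Φ u t (i + 1)) • sphFlow Φ (t i) (u i)) := fun i hi => by
    rw [hΦ.poinFlow_piP_smul _ _ (hu i hi.le), chainGrowth_succ, mul_assoc]
  have hstep : ∀ i < n, dist (piP ((ρ * chainGrowth Φ u t (i + 1)) • sphFlow Φ (t i) (u i)))
      (p (i + 1)) < 2 * δ := fun i hi =>
    (dist_piP_smul_le (hΦ.norm_sphFlow _ (hu i hi.le)) _ _).trans_lt (by linarith [hjump i hi])
  refine ⟨n, Function.update p 0 x, t, hn, Function.update_self .., by
    rw [Function.update_of_ne (by omega)], ?_, ht, ?_⟩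
  · intro i _
    rcases eq_or_ne i 0 with rfl | hi
    · rwa [Function.update_self]
    · rw [Function.update_of_ne hi]
      exact openHemi_subset_closedHemi (piP_mem_openHemi _)
  · intro i hi
    rw [Function.update_of_ne i.succ_ne_zero]
    rcases i with _ | i
    · have h0 := hstep 0 hi
      rw [chainGrowth_one] at h0
      rw [Function.update_self]
      linarith [dist_triangle (poinFlow Φ (t 0) x)
        (piP ((ρ * ‖Φ (t 0) (u 0)‖) • sphFlow Φ (t 0) (u 0))) (p 1)]
    · rw [Function.update_of_ne (by omega), hflow _ hi]
      linarith [hstep _ hi, dist_nonneg (x := poinFlow Φ (t 0) x)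
        (y := piP ((ρ * ‖Φ (t 0) (u 0)‖) • sphFlow Φ (t 0) (u 0)))]

theorem IsLinearFlow.exists_chainIn_piP_smul (hΦ : IsLinearFlow d Φ) {δ T : ℝ} {v w : Vec d}
    (h : ChainIn (sphFlow Φ) (sphere1 d) δ T v w) :
    ∃ P : ℝ, 0 < P ∧ ∀ ρ : ℝ,
      ChainIn (poinFlow Φ) (closedHemi d) (2 * δ) T (piP (ρ • v)) (piP ((ρ * P) • w)) := by
  obtain ⟨n, u, t, hn, rfl, rfl, hu, ht, hjump⟩ := h
  refine ⟨chainGrowth Φ u t n, hΦ.chainGrowth_pos t fun j hj => hu j hj.le, fun ρ => ?_⟩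
  refine hΦ.chainIn_lift hn hu ht hjump (openHemi_subset_closedHemi (piP_mem_openHemi _)) ?_
  rw [hΦ.poinFlow_piP_smul _ _ (hu 0 (Nat.zero_le n)), dist_self, zero_add]

theorem IsLinearFlow.exists_chainIn_emb_zero (hΦ : IsLinearFlow d Φ) {δ η T : ℝ} {v w : Vec d}
    (h : ChainIn (sphFlow Φ) (sphere1 d) δ T v w) (hη : 0 < η) :
    ∃ ρ : ℝ, 0 < ρ ∧
      ChainIn (poinFlow Φ) (closedHemi d) (2 * δ + η) T (emb v 0) (piP (ρ • w)) := by
  obtain ⟨n, u, t, hn, rfl, rfl, hu, ht, hjump⟩ := h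
  have hu0 : ‖u 0‖ = 1 := hu 0 (Nat.zero_le n)
  have hgrowth := hΦ.norm_apply_pos (t 0) hu0
  set ρ := 2 / (η * ‖Φ (t 0) (u 0)‖) with hρ_def
  have hρ : ρ * ‖Φ (t 0) (u 0)‖ = 2 / η := by rw [hρ_def]; field_simp
  refine ⟨ρ * chainGrowth Φ u t n,
    mul_pos (by positivity) (hΦ.chainGrowth_pos t fun j hj => hu j hj.le),
    hΦ.chainIn_lift hn hu ht hjump (emb_zero_mem_closedHemi hu0) ?_⟩
  have hequator := dist_piP_smul_emb_zero_le (hΦ.norm_sphFlow (t 0) hu0) (by positivity : 0 < 2 / η)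
  rw [IsLinearFlow.poinFlow_emb_zero, hρ, dist_comm]
  rw [div_div_cancel₀ two_ne_zero] at hequator
  linarith

end Lift

section Closure

open Real

variable {d : ℕ}

-- Polar-angle coordinates on the closed upper hemisphere; `θ = π / 2` is the equator.
def hemiPoint (v : Vec d) (θ : ℝ) : PVec d := emb (sin θ • v) (cos θ)

theorem continuous_hemiPoint : Continuous fun q : Vec d × ℝ => hemiPoint q.1 q.2 :=
  (WithLp.prod_continuous_toLp 2 (Vec d) ℝ).comp
    (((continuous_sin.comp continuous_snd).smul continuous_fst).prodMk
      (continuous_cos.comp continuous_snd))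

theorem piP_smul_eq_hemiPoint {v : Vec d} (hv : ‖v‖ = 1) (α : ℝ) :
    piP (α • v) = hemiPoint v (arctan α) := by
  have hnorm : ‖emb (α • v) 1‖ = √(1 + α ^ 2) := by
    rw [← sqrt_sq (norm_nonneg _), norm_emb_sq, norm_smul, hv, mul_one, norm_eq_abs, sq_abs,
      one_pow, add_comm]
  rw [piP, hnorm, emb_smul, hemiPoint, sin_arctan, cos_arctan, smul_smul, inv_mul_eq_div,
    mul_one, one_div]

theorem hemiPoint_pi_div_two (v : Vec d) : hemiPoint v (π / 2) = emb v 0 := by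
  simp [hemiPoint]

theorem closure_piP_cone_subset {M : Set (Vec d)} (hMs : M ⊆ sphere1 d) (hMc : IsCompact M) :
    closure (piP '' {x | ∃ α : ℝ, 0 < α ∧ ∃ v ∈ M, x = α • v}) ⊆
      (fun q : Vec d × ℝ => hemiPoint q.1 q.2) '' (M ×ˢ Set.Icc 0 (π / 2)) := by
  refine closure_minimal ?_ ((hMc.prod isCompact_Icc).image continuous_hemiPoint).isClosed
  rintro _ ⟨_, ⟨α, hα, v, hv, rfl⟩, rfl⟩
  exact ⟨(v, arctan α), ⟨hv, arctan_nonneg.2 hα.le, (arctan_lt_pi_div_two α).le⟩,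
    (piP_smul_eq_hemiPoint (hMs hv) α).symm⟩

theorem mem_closure_piP_cone {M : Set (Vec d)} (hMs : M ⊆ sphere1 d) (hMc : IsCompact M)
    {x : PVec d} (hx : x ∈ closure (piP '' {x | ∃ α : ℝ, 0 < α ∧ ∃ v ∈ M, x = α • v})) :
    x = piP 0 ∨ (∃ v ∈ M, x = emb v 0) ∨ ∃ v ∈ M, ∃ α : ℝ, 0 < α ∧ x = piP (α • v) := by
  obtain ⟨⟨v, θ⟩, ⟨hv, hθ₀, hθ₁⟩, rfl⟩ := closure_piP_cone_subset hMs hMc hx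
  dsimp only at hv hθ₀ hθ₁ ⊢
  rcases hθ₁.eq_or_lt with rfl | hθ₁
  · exact Or.inr (Or.inl ⟨v, hv, hemiPoint_pi_div_two v⟩)
  have htan : hemiPoint v θ = piP (tan θ • v) := by
    rw [piP_smul_eq_hemiPoint (hMs hv), arctan_tan (by linarith [pi_pos]) hθ₁]
  rcases hθ₀.eq_or_lt with rfl | hθ₀
  · exact Or.inl (by rw [htan, tan_zero, zero_smul])
  · exact Or.inr (Or.inr ⟨v, hv, tan θ, tan_pos_of_pos_of_lt_pi_div_two hθ₀ hθ₁, htan⟩)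

end Closure

section Reach

variable {d : ℕ} {Φ : ℝ → Vec d → Vec d} {M : Set (Vec d)} {v₀ : Vec d}

theorem piP_smul_mem_omegaIn
    (hl : ChainTransOn (poinFlow Φ) (openHemi d) (piP '' {x | ∃ α : ℝ, 0 < α ∧ x = α • v₀}))
    {ρ σ : ℝ} (hρ : 0 < ρ) (hσ : 0 < σ) :
    piP (σ • v₀) ∈ OmegaIn (poinFlow Φ) (closedHemi d) (piP (ρ • v₀)) :=
  omegaIn_mono openHemi_subset_closedHemi
    (hl _ ⟨_, ⟨ρ, hρ, rfl⟩, rfl⟩ _ ⟨_, ⟨σ, hσ, rfl⟩, rfl⟩)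

theorem chainEquiv_piP_smul (hΦ : IsLinearFlow d Φ)
    (hMt : ChainTransOn (sphFlow Φ) (sphere1 d) M) (hv₀ : v₀ ∈ M)
    (hl : ChainTransOn (poinFlow Φ) (openHemi d) (piP '' {x | ∃ α : ℝ, 0 < α ∧ x = α • v₀}))
    {v : Vec d} (hv : v ∈ M) {α : ℝ} (hα : 0 < α) :
    ChainEquiv (poinFlow Φ) (closedHemi d) (piP v₀) (piP (α • v)) := by
  rw [← one_smul ℝ v₀]
  constructor
  · intro ε T hε hT
    obtain ⟨P, hP, hlift⟩ :=
      hΦ.exists_chainIn_piP_smul (hMt v₀ hv₀ v hv (ε / 2) T (by positivity) hT)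
    have hto : ChainIn (poinFlow Φ) (closedHemi d) ε T (piP ((α / P) • v₀)) (piP (α • v)) := by
      simpa [div_mul_cancel₀ α hP.ne'] using (hlift (α / P)).mono_eps (by linarith)
    exact (piP_smul_mem_omegaIn hl one_pos (div_pos hα hP) ε T hε hT).trans hto
  · intro ε T hε hT
    obtain ⟨P, hP, hlift⟩ :=
      hΦ.exists_chainIn_piP_smul (hMt v hv v₀ hv₀ (ε / 2) T (by positivity) hT)
    exact ((hlift α).mono_eps (by linarith)).trans
      (piP_smul_mem_omegaIn hl (mul_pos hα hP) one_pos ε T hε hT)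

theorem chainEquiv_emb_zero (hΦ : IsLinearFlow d Φ) (hMs : M ⊆ sphere1 d)
    (hMt : ChainTransOn (sphFlow Φ) (sphere1 d) M) (hv₀ : v₀ ∈ M)
    (hl : ChainTransOn (poinFlow Φ) (openHemi d) (piP '' {x | ∃ α : ℝ, 0 < α ∧ x = α • v₀}))
    {v : Vec d} (hv : v ∈ M) :
    ChainEquiv (poinFlow Φ) (closedHemi d) (piP v₀) (emb v 0) := by
  constructor
  · intro ε T hε hT
    have hα : 0 < 4 / ε := by positivity
    have hfar := dist_piP_smul_emb_zero_le (hMs hv) hα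
    rw [div_div_eq_mul_div] at hfar
    have hchain := (chainEquiv_piP_smul hΦ hMt hv₀ hl hv hα).1 (ε / 2) T (by positivity) hT
    exact (hchain.retarget (emb_zero_mem_closedHemi (hMs hv))).mono_eps (by linarith)
  · intro ε T hε hT
    obtain ⟨ρ, hρ, hlift⟩ := hΦ.exists_chainIn_emb_zero
      (hMt v hv v₀ hv₀ (ε / 4) T (by positivity) hT) (by positivity : 0 < ε / 2)
    have hhalf := piP_smul_mem_omegaIn hl hρ one_pos ε T hε hT
    rw [one_smul] at hhalf
    exact (hlift.mono_eps (by linarith)).trans hhalf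

theorem chainEquiv_piP_zero (hΦ : IsLinearFlow d Φ) (hMs : M ⊆ sphere1 d) (hv₀ : v₀ ∈ M)
    (hl : ChainTransOn (poinFlow Φ) (openHemi d) (piP '' {x | ∃ α : ℝ, 0 < α ∧ x = α • v₀})) :
    ChainEquiv (poinFlow Φ) (closedHemi d) (piP v₀) (piP 0) := by
  have hmem : ∀ w : Vec d, piP w ∈ closedHemi d :=
    fun w => openHemi_subset_closedHemi (piP_mem_openHemi w)
  constructor
  · intro ε T hε hT
    set α := ε / (4 * (‖Φ T v₀‖ + 1)) with hα_def
    have hα : 0 < α := by positivity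
    have hhalf := piP_smul_mem_omegaIn hl one_pos hα ε T hε hT
    rw [one_smul] at hhalf
    refine hhalf.trans (ChainIn.single (hmem _) (hmem _) le_rfl ?_)
    have hsmall : 2 * (α * ‖Φ T v₀‖) < ε := by
      rw [hα_def, div_mul_eq_mul_div, mul_div_assoc', div_lt_iff₀ (by positivity)]
      nlinarith [norm_nonneg (Φ T v₀)]
    rw [hΦ.poinFlow_piP, hΦ.map_smul]
    refine (dist_piP_le_two_mul _ _).trans_lt ?_
    rwa [dist_zero_right, norm_smul, Real.norm_eq_abs, abs_of_pos hα]
  · intro ε T hε hT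
    have hα : 0 < ε / 4 := by positivity
    have hhalf := piP_smul_mem_omegaIn hl hα one_pos ε T hε hT
    rw [one_smul] at hhalf
    refine (ChainIn.single (hmem _) (hmem _) le_rfl ?_).trans hhalf
    rw [hΦ.poinFlow_piP, hΦ.map_zero]
    refine (dist_piP_le_two_mul _ _).trans_lt ?_
    rw [dist_zero_left, norm_smul, hMs hv₀, Real.norm_eq_abs, abs_of_pos hα]
    linarith

end Reach

theorem stmt10 {d : ℕ} (Φ : ℝ → Vec d → Vec d) (hΦ : IsLinearFlow d Φ)
    (M : Set (Vec d)) (hMs : M ⊆ sphere1 d) (hMc : IsCompact M)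
    (hMt : ChainTransOn (sphFlow Φ) (sphere1 d) M)
    (v₀ : Vec d) (hv₀ : v₀ ∈ M)
    (hl : ChainTransOn (poinFlow Φ) (openHemi d)
      (piP '' {x | ∃ α : ℝ, 0 < α ∧ x = α • v₀})) :
    ChainTransOn (poinFlow Φ) (closedHemi d)
      (closure (piP '' {x | ∃ α : ℝ, 0 < α ∧ ∃ v ∈ M, x = α • v})) := by
  refine chainTransOn_of_chainEquiv (piP v₀) fun x hx => ?_
  rcases mem_closure_piP_cone hMs hMc hx with rfl | ⟨v, hv, rfl⟩ | ⟨v, hv, α, hα, rfl⟩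
  · exact chainEquiv_piP_zero hΦ hMs hv₀ hl
  · exact chainEquiv_emb_zero hΦ hMs hMt hv₀ hl hv
  · exact chainEquiv_piP_smul hΦ hMt hv₀ hl hv hα
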